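/- Let K ≥ 2, let F be a finite field, and let L ≥ 1. Let W_1,…,W_K be mutually independent random variables, each uniform on F^L, independent of key random variables Z_1,…,Z_K taking values in F^L and satisfying Σ_{k∈[K]} Z_k = 0 pointwise. Set X_k = W_k + Z_k for each k. Let S, T ⊆ [K] with |S ∪ T| ≤ K−1, and suppose H((Z_k)_{k∈S\T} | (Z_k)_{k∈T}) = |S\T| · L (entropy measured in |F|-ary units, with L the number of F-symbols per input). Then I((W_k)_{k∈S}; (X_1,…,X_K) | Σ_{k∈[K]} W_k, (W_k, Z_k)_{k∈T}) = 0. -/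

import Mathlib

/-! Since `X = W + Z` with `W` uniform on `(F^L)^K` and independent of the keys, `X` is again
uniform and independent of the keys (one-time pad), and `∑ W = ∑ X` because the keys sum to zero.
The whole view `((W_S, X), (∑ W, (W_k, Z_k)_{k ∈ T}))` is therefore an injective function of
`(X, Z_{S∖T}, Z_T)`. Maximal conditional entropy forces `Z_{S∖T}` to be uniform given `Z_T`
(equality case of Gibbs' inequality), so the pmf of `(X, Z_{S∖T}, Z_T)` depends on `Z_T` only.
Hence the joint pmf of the view splits as an indicator in `(W_S, conditioning)` times a function
of `(X, conditioning)`, which is conditional independence. -/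

open Finset
open scoped Classical

namespace WeakSecureSummation

noncomputable section

/-- Probability that random variable `X` takes value `a`, w.r.t. pmf `p`. -/
def pr {Ω α : Type*} [Fintype Ω] [DecidableEq α] (p : Ω → ℝ) (X : Ω → α) (a : α) : ℝ :=
  ∑ ω, if X ω = a then p ω else 0

/-- Shannon entropy of `X` in `q`-ary units. -/
def H {Ω α : Type*} [Fintype Ω] [Fintype α] [DecidableEq α]
    (q : ℕ) (p : Ω → ℝ) (X : Ω → α) : ℝ :=
  -∑ a : α, pr p X a * (Real.log (pr p X a) / Real.log (q : ℝ))

/-- Conditional entropy `H(X | Y)` in `q`-ary units. -/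
def Hc {Ω α β : Type*} [Fintype Ω] [Fintype α] [DecidableEq α] [Fintype β] [DecidableEq β]
    (q : ℕ) (p : Ω → ℝ) (X : Ω → α) (Y : Ω → β) : ℝ :=
  H q p (fun ω => (X ω, Y ω)) - H q p Y

/-- Conditional mutual information `I(X ; Y | Z)` in `q`-ary units. -/
def MIc {Ω α β γ : Type*} [Fintype Ω] [Fintype α] [DecidableEq α] [Fintype β] [DecidableEq β]
    [Fintype γ] [DecidableEq γ] (q : ℕ) (p : Ω → ℝ) (X : Ω → α) (Y : Ω → β) (Z : Ω → γ) : ℝ :=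
  Hc q p X Z + Hc q p Y Z - Hc q p (fun ω => (X ω, Y ω)) Z

/-- A secure-summation scheme for `K` users over the finite field `F`:
input length `L`, message length `LX`, source-key length `LZ`, a finite sample
space `Ω` with pmf `p`, inputs `W k`, source key `ZS`, keys `Z k` (with value
types `ZT k`), and messages `X k`. -/
structure Scheme (K : ℕ) (F : Type) [Field F] [Fintype F] [DecidableEq F] where
  L : ℕ
  LX : ℕ
  LZ : ℕ
  Ω : Type
  [finΩ : Fintype Ω]
  p : Ω → ℝ
  W : Fin K → Ω → Fin L → F
  ZS : Ω → Fin LZ → F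
  ZT : Fin K → Type
  [finZT : ∀ k, Fintype (ZT k)]
  [decZT : ∀ k, DecidableEq (ZT k)]
  Z : ∀ k, Ω → ZT k
  X : Fin K → Ω → Fin LX → F

attribute [instance] Scheme.finΩ Scheme.finZT Scheme.decZT

variable {K : ℕ} {F : Type} [Field F] [Fintype F] [DecidableEq F]

/-- The sum of all inputs. -/
def Scheme.sumW (C : Scheme K F) : C.Ω → (Fin C.L → F) := fun ω => ∑ k, C.W k ω

/-- The tuple of inputs `(W k)_{k ∈ A}`. -/
def Scheme.Wtup (C : Scheme K F) (A : Finset (Fin K)) :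
    C.Ω → ({x // x ∈ A} → (Fin C.L → F)) :=
  fun ω k => C.W k.1 ω

/-- The tuple of keys `(Z k)_{k ∈ A}`. -/
def Scheme.Ztup (C : Scheme K F) (A : Finset (Fin K)) :
    C.Ω → ((k : {x // x ∈ A}) → C.ZT k.1) :=
  fun ω k => C.Z k.1 ω

/-- The tuple `((W k, Z k))_{k ∈ A}`. -/
def Scheme.WZtup (C : Scheme K F) (A : Finset (Fin K)) :
    C.Ω → ((k : {x // x ∈ A}) → (Fin C.L → F) × C.ZT k.1) :=
  fun ω k => (C.W k.1 ω, C.Z k.1 ω)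

/-- The tuple of all messages `(X 1, …, X K)`. -/
def Scheme.Xall (C : Scheme K F) : C.Ω → (Fin K → Fin C.LX → F) := fun ω k => C.X k ω

/-- The tuple of all inputs `(W 1, …, W K)`. -/
def Scheme.Wall (C : Scheme K F) : C.Ω → (Fin K → Fin C.L → F) := fun ω k => C.W k ω

/-- `p` is a valid probability mass function. -/
def Scheme.ValidP (C : Scheme K F) : Prop :=
  (∀ ω, 0 ≤ C.p ω) ∧ (∑ ω, C.p ω = 1)

/-- Inputs are uniform on `F^L`, mutually independent, and independent of the source key. -/
def Scheme.IndepUnif (C : Scheme K F) : Prop :=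
  (∀ (k : Fin K) (a : Fin C.L → F), pr C.p (C.W k) a = ((Fintype.card F : ℝ) ^ C.L)⁻¹) ∧
  (∀ w : Fin K → Fin C.L → F, pr C.p C.Wall w = ∏ k, pr C.p (C.W k) (w k)) ∧
  (∀ (w : Fin K → Fin C.L → F) (z : Fin C.LZ → F),
    pr C.p (fun ω => (C.Wall ω, C.ZS ω)) (w, z) = pr C.p C.Wall w * pr C.p C.ZS z)

/-- Each key is a deterministic function of the source key, and each message is a
deterministic function of the own input and key. -/
def Scheme.Det (C : Scheme K F) : Prop :=
  (∀ k, ∃ f : (Fin C.LZ → F) → C.ZT k, ∀ ω, C.Z k ω = f (C.ZS ω)) ∧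
  (∀ k, ∃ g : (Fin C.L → F) → C.ZT k → (Fin C.LX → F), ∀ ω, C.X k ω = g (C.W k ω) (C.Z k ω))

/-- Correctness: the sum of inputs is decodable from all messages. -/
def Scheme.Correct (C : Scheme K F) : Prop :=
  Hc (Fintype.card F) C.p C.sumW C.Xall = 0

/-- All the model constraints except security. -/
def Scheme.Good (C : Scheme K F) : Prop :=
  C.ValidP ∧ C.IndepUnif ∧ C.Det ∧ C.Correct

/-- Security for a single pair: colluding with users in `T`, nothing is revealed about
the inputs in `S` beyond the sum and what the colluders know. -/
def Scheme.SecureFor (C : Scheme K F) (S T : Finset (Fin K)) : Prop :=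
  MIc (Fintype.card F) C.p (C.Wtup S) C.Xall (fun ω => (C.sumW ω, C.WZtup T ω)) = 0

/-- A security pattern: families of security input sets and colluding user sets. -/
structure Pattern (K M N : ℕ) where
  S : Fin M → Finset (Fin K)
  T : Fin N → Finset (Fin K)

/-- The family of security input sets is monotone (closed under subsets). -/
def Pattern.MonoS {K M N : ℕ} (P : Pattern K M N) : Prop :=
  ∀ (m : Fin M) (A : Finset (Fin K)), A ⊆ P.S m → ∃ m', P.S m' = A

/-- The family of colluding user sets is monotone (closed under subsets). -/
def Pattern.MonoT {K M N : ℕ} (P : Pattern K M N) : Prop :=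
  ∀ (n : Fin N) (A : Finset (Fin K)), A ⊆ P.T n → ∃ n', P.T n' = A

/-- A valid security pattern: monotone families, nonempty union of security sets,
and every colluding set of size at most `K - 2`. -/
def Pattern.Valid {K M N : ℕ} (P : Pattern K M N) : Prop :=
  P.MonoS ∧ P.MonoT ∧ (∃ m, (P.S m).Nonempty) ∧ (∀ n, (P.T n).card ≤ K - 2)

/-- The scheme is secure for every pair of the pattern. -/
def Scheme.Secure {M N : ℕ} (C : Scheme K F) (P : Pattern K M N) : Prop :=
  ∀ m n, C.SecureFor (P.S m) (P.T n)

/-- Implicit security input set `S_I`. -/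
def Pattern.SI {K M N : ℕ} (P : Pattern K M N) : Finset (Fin K) :=
  (Finset.univ.filter fun u =>
      ∃ m n, (P.S m ∪ P.T n).card = K - 1 ∧ Finset.univ \ (P.S m ∪ P.T n) = {u}) \
    Finset.univ.biUnion P.S

/-- Total security input set `S̄`. -/
def Pattern.Sbar {K M N : ℕ} (P : Pattern K M N) : Finset (Fin K) :=
  Finset.univ.biUnion P.S ∪ P.SI

/-- `A_{m,n} = (S_m ∪ T_n) ∩ S̄`. -/
def Pattern.A {K M N : ℕ} (P : Pattern K M N) (m : Fin M) (n : Fin N) : Finset (Fin K) :=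
  (P.S m ∪ P.T n) ∩ P.Sbar

/-- `a* = max_{m,n} |A_{m,n}|`. -/
def Pattern.aStar {K M N : ℕ} (P : Pattern K M N) : ℕ :=
  Finset.univ.sup fun mn : Fin M × Fin N => (P.A mn.1 mn.2).card

/-- `Q`: union of `S_m ∪ T_n` over all pairs attaining `a*`. -/
def Pattern.Q {K M N : ℕ} (P : Pattern K M N) : Finset (Fin K) :=
  Finset.univ.biUnion fun mn : Fin M × Fin N =>
    if (P.A mn.1 mn.2).card = P.aStar then P.S mn.1 ∪ P.T mn.2 else ∅

/-- Feasibility for the linear program LP(𝒮,𝒯): variables `b k` for `k ∉ S̄`,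
nonnegative, with `∑_{k ∈ [K] \ (S_m ∪ T_n)} b k ≥ 1` for every maximal pair. -/
def Pattern.LPFeasible {K M N : ℕ} (P : Pattern K M N) (b : Fin K → ℝ) : Prop :=
  (∀ k, k ∉ P.Sbar → 0 ≤ b k) ∧ (∀ k ∈ P.Sbar, b k = 0) ∧
  ∀ m n, (P.A m n).card = P.aStar → 1 ≤ ∑ k ∈ Finset.univ \ (P.S m ∪ P.T n), b k

/-- LP objective: `max_{m,n : |A_{m,n}| = a*} ∑_{k ∈ T_n \ S̄} b k`. -/
def Pattern.LPObj {K M N : ℕ} (P : Pattern K M N) (b : Fin K → ℝ) : ℝ :=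
  sSup {x : ℝ | ∃ m n, (P.A m n).card = P.aStar ∧ x = ∑ k ∈ P.T n \ P.Sbar, b k}

/-- `b*`: optimal value of the linear program. -/
def Pattern.bStar {K M N : ℕ} (P : Pattern K M N) : ℝ :=
  sInf {v : ℝ | ∃ b, P.LPFeasible b ∧ P.LPObj b = v}

/-- Achievability of key rate `R` for pattern `P`, with a given finite field `F`. -/
def AchWith (K M N : ℕ) (P : Pattern K M N) (R : ℝ) (F : Type)
    [Field F] [Fintype F] [DecidableEq F] : Prop :=
  ∃ C : Scheme K F, 1 ≤ C.L ∧ C.Good ∧ C.Secure P ∧ (C.LZ : ℝ) / (C.L : ℝ) ≤ R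

/-- Achievability of key rate `R`: some finite field (i.e. some prime power `q`)
admits a valid, correct, secure scheme of key rate at most `R`. -/
def Achievable {K M N : ℕ} (P : Pattern K M N) (R : ℝ) : Prop :=
  ∃ (F : Type) (i1 : Field F) (i2 : Fintype F) (i3 : DecidableEq F),
    @AchWith K M N P R F i1 i2 i3

/-- The optimal key rate `R*`: infimum of achievable rates. -/
def optRate {K M N : ℕ} (P : Pattern K M N) : ℝ :=
  sInf {R : ℝ | Achievable P R}

section Pmf

variable {Ω α β γ G : Type*} [Fintype Ω] [DecidableEq α] [DecidableEq β] {p : Ω → ℝ}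

lemma pr_nonneg (hp0 : ∀ ω, 0 ≤ p ω) (X : Ω → α) (a : α) : 0 ≤ pr p X a :=
  Finset.sum_nonneg fun ω _ => by split_ifs <;> simp [hp0 ω]

lemma le_pr_self (hp0 : ∀ ω, 0 ≤ p ω) (X : Ω → α) (ω : Ω) : p ω ≤ pr p X (X ω) := by
  unfold pr
  simpa using Finset.single_le_sum (f := fun ω' => if X ω' = X ω then p ω' else 0)
    (fun ω' _ => by split_ifs <;> simp [hp0 ω']) (Finset.mem_univ ω)

lemma pr_comp_equiv (e : α ≃ β) (X : Ω → α) (b : β) :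
    pr p (fun ω => e (X ω)) b = pr p X (e.symm b) := by
  simp only [pr, ← Equiv.eq_symm_apply]

lemma pr_add_prod_eq_mul [AddGroup G] [DecidableEq G] {c : ℝ} (U V : Ω → G)
    (hUV : ∀ u v, pr p (fun ω => (U ω, V ω)) (u, v) = c * pr p V v) (x v : G) :
    pr p (fun ω => (U ω + V ω, V ω)) (x, v) = c * pr p V v :=
  let e : G × G ≃ G × G :=
    { toFun := fun uv => (uv.1 + uv.2, uv.2)
      invFun := fun xv => (xv.1 - xv.2, xv.2)
      left_inv := fun _ => by simp
      right_inv := fun _ => by simp }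
  (pr_comp_equiv e (fun ω => (U ω, V ω)) (x, v)).trans (hUV (x - v) v)

variable [Fintype α]

lemma sum_pr (p : Ω → ℝ) (X : Ω → α) : ∑ a, pr p X a = ∑ ω, p ω := by
  unfold pr
  rw [Finset.sum_comm]
  simp

lemma pr_comp (p : Ω → ℝ) (U : Ω → α) (g : α → β) (b : β) :
    pr p (fun ω => g (U ω)) b = ∑ a, if g a = b then pr p U a else 0 := by
  unfold pr
  beta_reduce
  rw [← Finset.sum_fiberwise Finset.univ U]
  refine Finset.sum_congr rfl fun a _ => ?_
  rw [Finset.sum_congr rfl fun ω hω => by rw [(Finset.mem_filter.mp hω).2]]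
  split_ifs <;> simp [Finset.sum_filter, *]

lemma sum_pr_mul (p : Ω → ℝ) (X : Ω → α) (f : ℝ → ℝ) :
    ∑ a, pr p X a * f (pr p X a) = ∑ ω, p ω * f (pr p X (X ω)) := by
  simp only [pr, Finset.sum_mul, ite_mul, zero_mul]
  rw [Finset.sum_comm]
  simp

lemma sum_pr_prod_fst (p : Ω → ℝ) (A : Ω → α) (B : Ω → β) (b : β) :
    ∑ a, pr p (fun ω => (A ω, B ω)) (a, b) = pr p B b := by
  unfold pr
  rw [Finset.sum_comm]
  simp [Prod.ext_iff, ite_and]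

lemma pr_prod_le_pr_snd (hp0 : ∀ ω, 0 ≤ p ω) (A : Ω → α) (B : Ω → β) (a : α)
    (b : β) :
    pr p (fun ω => (A ω, B ω)) (a, b) ≤ pr p B b :=
  sum_pr_prod_fst p A B b ▸
    Finset.single_le_sum (f := fun a' => pr p (fun ω => (A ω, B ω)) (a', b))
      (fun _ _ => pr_nonneg hp0 _ _) (Finset.mem_univ a)

lemma pr_prod_comp_snd [Fintype γ] [DecidableEq γ] {c : ℝ} (U : Ω → γ) (V : Ω → α)
    (hUV : ∀ u v, pr p (fun ω => (U ω, V ω)) (u, v) = c * pr p V v) (g : α → β)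
    (u : γ) (b : β) :
    pr p (fun ω => (U ω, g (V ω))) (u, b) = c * pr p (fun ω => g (V ω)) b := by
  rw [pr_comp p (fun ω => (U ω, V ω)) (fun uv => (uv.1, g uv.2)), pr_comp p V g,
    Fintype.sum_prod_type]
  simp [hUV, Finset.mul_sum, ite_and]

end Pmf

section Entropy

variable {Ω α β γ : Type*} [Fintype Ω] [Fintype α] [DecidableEq α] [Fintype β]
  [DecidableEq β] [Fintype γ] [DecidableEq γ] {p : Ω → ℝ}

lemma H_eq_neg_sum (q : ℕ) (p : Ω → ℝ) (X : Ω → α) :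
    H q p X = -∑ ω, p ω * (Real.log (pr p X (X ω)) / Real.log q) := by
  rw [H, sum_pr_mul p X (fun x => Real.log x / Real.log q)]

lemma MIc_eq_zero_of_pr_mul_pr_eq (q : ℕ) (hp0 : ∀ ω, 0 ≤ p ω)
    (X : Ω → α) (Y : Ω → β) (Z : Ω → γ)
    (hfac : ∀ ω, p ω ≠ 0 →
      pr p (fun ω' => (X ω', Z ω')) (X ω, Z ω) * pr p (fun ω' => (Y ω', Z ω')) (Y ω, Z ω)
        = pr p (fun ω' => ((X ω', Y ω'), Z ω')) ((X ω, Y ω), Z ω) * pr p Z (Z ω)) :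
    MIc q p X Y Z = 0 := by
  have hterm : ∀ ω,
      p ω * (Real.log (pr p (fun ω' => (X ω', Z ω')) (X ω, Z ω)) / Real.log q)
        + p ω * (Real.log (pr p (fun ω' => (Y ω', Z ω')) (Y ω, Z ω)) / Real.log q)
      = p ω *
          (Real.log (pr p (fun ω' => ((X ω', Y ω'), Z ω')) ((X ω, Y ω), Z ω)) / Real.log q)
        + p ω * (Real.log (pr p Z (Z ω)) / Real.log q) := by
    intro ω
    by_cases hω : p ω = 0
    · simp [hω]
    have hω' : 0 < p ω := (hp0 ω).lt_of_ne' hω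
    have hlog : Real.log (pr p (fun ω' => (X ω', Z ω')) (X ω, Z ω))
          + Real.log (pr p (fun ω' => (Y ω', Z ω')) (Y ω, Z ω))
        = Real.log (pr p (fun ω' => ((X ω', Y ω'), Z ω')) ((X ω, Y ω), Z ω))
          + Real.log (pr p Z (Z ω)) := by
      rw [← Real.log_mul, ← Real.log_mul, hfac ω hω] <;>
        exact (hω'.trans_le (le_pr_self hp0 _ ω)).ne'
    linear_combination (p ω / Real.log q) * hlog
  have hsum := Finset.sum_congr rfl fun ω (_ : ω ∈ Finset.univ) => hterm ω
  simp only [Finset.sum_add_distrib] at hsum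
  simp only [MIc, Hc, H_eq_neg_sum]
  linarith

lemma MIc_eq_zero_of_pr_eq_mul (q : ℕ) (hp0 : ∀ ω, 0 ≤ p ω)
    (X : Ω → α) (Y : Ω → β) (Z : Ω → γ) (g : α → γ → ℝ) (h : β → γ → ℝ)
    (hgh : ∀ x y z, pr p (fun ω => ((X ω, Y ω), Z ω)) ((x, y), z) = g x z * h y z) :
    MIc q p X Y Z = 0 := by
  set V := fun ω => ((X ω, Y ω), Z ω)
  have hXZ : ∀ x z, pr p (fun ω => (X ω, Z ω)) (x, z) = g x z * ∑ y, h y z := by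
    intro x z
    rw [pr_comp p V (fun v => (v.1.1, v.2))]
    simp [Fintype.sum_prod_type, hgh, Finset.mul_sum, ite_and]
  have hYZ : ∀ y z, pr p (fun ω => (Y ω, Z ω)) (y, z) = (∑ x, g x z) * h y z := by
    intro y z
    rw [pr_comp p V (fun v => (v.1.2, v.2))]
    simp [Fintype.sum_prod_type, hgh, Finset.sum_mul, ite_and]
  have hZ : ∀ z, pr p Z z = (∑ x, g x z) * ∑ y, h y z := by
    intro z
    rw [pr_comp p V (fun v => v.2)]
    simp [Fintype.sum_prod_type, hgh, Finset.sum_mul_sum]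
  refine MIc_eq_zero_of_pr_mul_pr_eq q hp0 X Y Z fun ω _ => ?_
  rw [hXZ, hYZ, hgh, hZ]
  ring

lemma eq_of_sum_mul_log_div_eq_zero {ι : Type*} [Fintype ι] {r c : ι → ℝ}
    (hr : ∀ i, 0 ≤ r i) (hrc : ∀ i, c i = 0 → r i = 0) (hc : ∀ i, 0 ≤ c i)
    (hsum : ∑ i, r i = ∑ i, c i) (h : ∑ i, r i * Real.log (r i / c i) = 0) (i : ι) :
    r i = c i := by
  set e : ι → ℝ := fun i => r i * Real.log (r i / c i) + c i - r i
  -- `e` is `c * klFun (r / c)` where `c ≠ 0`, and vanishes where `c = 0`.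
  have he : ∀ i, 0 ≤ e i ∧ (e i = 0 → r i = c i) := by
    intro i
    rcases (hc i).eq_or_lt with hci | hci
    · simp [e, ← hci, hrc i hci.symm]
    have hkl : e i = c i * InformationTheory.klFun (r i / c i) := by
      simp only [e, InformationTheory.klFun_apply]
      field_simp
    have hrc0 : 0 ≤ r i / c i := div_nonneg (hr i) hci.le
    refine ⟨hkl ▸ mul_nonneg hci.le (InformationTheory.klFun_nonneg hrc0), fun h0 => ?_⟩
    rw [hkl, mul_eq_zero, InformationTheory.klFun_eq_zero_iff hrc0,
      div_eq_one_iff_eq hci.ne'] at h0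
    exact h0.resolve_left hci.ne'
  have hsum_e : ∑ i, e i = 0 := by
    simp only [e, Finset.sum_sub_distrib, Finset.sum_add_distrib, h, hsum]
    ring
  exact (he i).2 ((Finset.sum_eq_zero_iff_of_nonneg fun i _ => (he i).1).mp hsum_e i
    (Finset.mem_univ i))

lemma H_mul_log (q : ℕ) (hq : 1 < q) (p : Ω → ℝ) (X : Ω → α) :
    H q p X * Real.log q = -∑ a, pr p X a * Real.log (pr p X a) := by
  have : Real.log q ≠ 0 := (Real.log_pos (by exact_mod_cast hq)).ne'
  simp only [H, mul_div_assoc', ← Finset.sum_div, neg_mul, div_mul_cancel₀ _ this]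

lemma pr_prod_eq_inv_card_mul_of_Hc_eq [Nonempty α] (q : ℕ) (hq : 1 < q)
    (hp0 : ∀ ω, 0 ≤ p ω) (hp1 : ∑ ω, p ω = 1) (A : Ω → α) (B : Ω → β)
    (hH : Hc q p A B = Real.log (Fintype.card α) / Real.log q) (a : α) (b : β) :
    pr p (fun ω => (A ω, B ω)) (a, b) = (Fintype.card α : ℝ)⁻¹ * pr p B b := by
  set r : α × β → ℝ := pr p (fun ω => (A ω, B ω))
  set s : β → ℝ := pr p B
  set N : ℝ := (Fintype.card α : ℝ)
  have hN : 0 < N := by simp [N, Fintype.card_pos]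
  have hpos : ∀ v, 0 < r v → 0 < s v.2 := fun v hv =>
    hv.trans_le (pr_prod_le_pr_snd hp0 A B v.1 v.2)
  have hlog : ∀ v, r v * Real.log (r v / (N⁻¹ * s v.2))
      = r v * Real.log (r v) - r v * Real.log (s v.2) + r v * Real.log N := by
    intro v
    rcases (show 0 ≤ r v from pr_nonneg hp0 _ v).eq_or_lt with hv | hv
    · simp [← hv]
    rw [Real.log_div hv.ne' (by have := hpos v hv; positivity), Real.log_mul (by positivity)
      (hpos v hv).ne', Real.log_inv]
    ring
  have hmarg : ∑ v : α × β, r v * Real.log (s v.2) = ∑ b, s b * Real.log (s b) := by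
    rw [Fintype.sum_prod_type_right]
    simp only [← Finset.sum_mul, r, s, sum_pr_prod_fst]
  have hrsum : ∑ v, r v = 1 := (sum_pr p _).trans hp1
  refine eq_of_sum_mul_log_div_eq_zero (r := r) (c := fun v => N⁻¹ * s v.2)
    (pr_nonneg hp0 _) (fun v hv => ?_)
    (fun v => mul_nonneg (inv_nonneg.2 hN.le) (pr_nonneg hp0 _ _)) ?_ ?_ (a, b)
  · exact le_antisymm ((pr_prod_le_pr_snd hp0 A B v.1 v.2).trans_eq
      ((mul_eq_zero.mp hv).resolve_left (by positivity))) (pr_nonneg hp0 _ v)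
  · rw [hrsum, Fintype.sum_prod_type_right]
    simp [Finset.card_univ, N, s, sum_pr, hp1]
  · have hH' := congrArg (· * Real.log q) hH
    simp only [Hc, sub_mul, H_mul_log q hq, div_mul_cancel₀ _
      (Real.log_pos (by exact_mod_cast hq : (1 : ℝ) < q)).ne'] at hH'
    simp only [hlog, Finset.sum_add_distrib, Finset.sum_sub_distrib, hmarg, ← Finset.sum_mul,
      hrsum]
    linarith

end Entropy

section PadView

variable {ι G : Type*} [Fintype ι] [DecidableEq ι] [AddCommGroup G] (S T : Finset ι)

/-- Rebuilds `((W_S, X), (∑ W, (W_k, Z_k)_{k ∈ T}))` from `X = x`, `Z_{S∖T} = u`, `Z_T = t`,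
using `W = X - Z` and `∑ Z = 0`. -/
def padView (xut : (ι → G) × ((↥(S \ T) → G) × (T → G))) :
    ((S → G) × (ι → G)) × (G × (T → G × G)) :=
  (((fun k => xut.1 k - if hT : k.1 ∈ T then xut.2.2 ⟨k, hT⟩
      else xut.2.1 ⟨k, Finset.mem_sdiff.2 ⟨k.2, hT⟩⟩), xut.1),
    (∑ k, xut.1 k, fun k => (xut.1 k - xut.2.2 k, xut.2.2 k)))

variable {S T}

lemma padView_eq_iff (x : ι → G) (u : ↥(S \ T) → G) (t : T → G) (a : S → G)
    (y : ι → G) (s : G) (c : T → G × G) :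
    padView S T (x, (u, t)) = ((a, y), (s, c)) ↔
      (x = y ∧ u = (fun k : ↥(S \ T) => y k - a ⟨k, (Finset.mem_sdiff.1 k.2).1⟩) ∧
        t = fun k => (c k).2) ∧
      (∀ k (hS : k ∈ S) (hT : k ∈ T), a ⟨k, hS⟩ = (c ⟨k, hT⟩).1) ∧
      ((∀ k : T, y k = (c k).1 + (c k).2) ∧ ∑ k, y k = s) := by
  simp only [padView, Prod.mk.injEq]
  constructor
  · rintro ⟨⟨rfl, rfl⟩, rfl, rfl⟩
    refine ⟨⟨rfl, ?_, rfl⟩, fun k hS hT => by simp [hT], fun k => by simp, rfl⟩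
    ext ⟨k, hk⟩
    simp [(Finset.mem_sdiff.1 hk).2]
  · rintro ⟨⟨rfl, rfl, rfl⟩, hSa, hy, rfl⟩
    refine ⟨⟨funext fun k => ?_, rfl⟩, rfl, funext fun k => by simp [hy k]⟩
    split_ifs with hT
    · simp [hy ⟨k, hT⟩, hSa k k.2 hT]
    · simp

variable [Fintype G] [DecidableEq G] {Ω : Type*} [Fintype Ω] {p : Ω → ℝ}

lemma pr_padView (U : Ω → (ι → G) × ((↥(S \ T) → G) × (T → G)))
    (f : (T → G) → ℝ) (hU : ∀ x u t, pr p U (x, (u, t)) = f t)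
    (a : S → G) (y : ι → G) (s : G) (c : T → G × G) :
    pr p (fun ω => padView S T (U ω)) ((a, y), (s, c)) =
      (if ∀ k (hS : k ∈ S) (hT : k ∈ T), a ⟨k, hS⟩ = (c ⟨k, hT⟩).1 then 1 else 0) *
      (if (∀ k : T, y k = (c k).1 + (c k).2) ∧ ∑ k, y k = s then f fun k => (c k).2
        else 0) := by
  rw [pr_comp p U (padView S T)]
  simp only [Fintype.sum_prod_type, padView_eq_iff, ite_and, hU]
  split_ifs <;> simp

lemma MIc_padView_eq_zero (q : ℕ) (hp0 : ∀ ω, 0 ≤ p ω)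
    (U : Ω → (ι → G) × ((↥(S \ T) → G) × (T → G))) (f : (T → G) → ℝ)
    (hU : ∀ x u t, pr p U (x, (u, t)) = f t) :
    MIc q p (fun ω => (padView S T (U ω)).1.1) (fun ω => (padView S T (U ω)).1.2)
      (fun ω => (padView S T (U ω)).2) = 0 :=
  MIc_eq_zero_of_pr_eq_mul q hp0 _ _ _ _ _ fun a y c => pr_padView U f hU a y c.1 c.2

end PadView

end
end WeakSecureSummation

open WeakSecureSummation in
theorem security_from_key_independence_general {K L : ℕ}
    {F : Type} [Field F] [Fintype F] [DecidableEq F]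
    {Ω : Type} [Fintype Ω] (p : Ω → ℝ)
    (hp0 : ∀ ω, 0 ≤ p ω) (hp1 : ∑ ω, p ω = 1)
    (W Z : Fin K → Ω → Fin L → F)
    (hunif : ∀ (k : Fin K) (a : Fin L → F),
      pr p (W k) a = ((Fintype.card F : ℝ) ^ L)⁻¹)
    (hWindep : ∀ w : Fin K → Fin L → F,
      pr p (fun ω k => W k ω) w = ∏ k, pr p (W k) (w k))
    (hWZindep : ∀ w z : Fin K → Fin L → F,
      pr p (fun ω => (fun k => W k ω, fun k => Z k ω)) (w, z)
        = pr p (fun ω k => W k ω) w * pr p (fun ω k => Z k ω) z)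
    (hzero : ∀ ω, ∑ k, Z k ω = 0)
    (S T : Finset (Fin K))
    (hHZ : Hc (Fintype.card F) p
        (fun ω (k : {x // x ∈ S \ T}) => Z k.1 ω)
        (fun ω (k : {x // x ∈ T}) => Z k.1 ω)
      = ((S \ T).card : ℝ) * L) :
    MIc (Fintype.card F) p
      (fun ω (k : {x // x ∈ S}) => W k.1 ω)
      (fun ω (k : Fin K) => W k ω + Z k ω)
      (fun ω => (∑ k, W k ω, fun (k : {x // x ∈ T}) => (W k.1 ω, Z k.1 ω))) = 0 := by
  have hq : 1 < Fintype.card F := Fintype.one_lt_card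
  have hWZ : ∀ w z, pr p (fun ω => (fun k => W k ω, fun k => Z k ω)) (w, z)
      = ((Fintype.card F : ℝ) ^ L)⁻¹ ^ K * pr p (fun ω k => Z k ω) z := by
    intro w z
    simp [hWZindep, hWindep, hunif]
  have hHZ' : Hc (Fintype.card F) p (fun ω (k : ↥(S \ T)) => Z k.1 ω)
      (fun ω (k : T) => Z k.1 ω)
      = Real.log (Fintype.card (↥(S \ T) → Fin L → F)) / Real.log (Fintype.card F) := by
    have : Real.log (Fintype.card F) ≠ 0 := (Real.log_pos (by exact_mod_cast hq)).ne'
    rw [hHZ, Fintype.card_fun, Fintype.card_fun, Fintype.card_fin, Fintype.card_coe]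
    push_cast [Real.log_pow]
    field_simp
  have hU : ∀ x u t, pr p (fun ω => ((fun k => W k ω + Z k ω),
      ((fun k : ↥(S \ T) => Z k.1 ω), fun k : T => Z k.1 ω))) (x, (u, t))
      = ((Fintype.card F : ℝ) ^ L)⁻¹ ^ K *
        ((Fintype.card (↥(S \ T) → Fin L → F) : ℝ)⁻¹ *
          pr p (fun ω (k : T) => Z k.1 ω) t) := by
    intro x u t
    exact (pr_prod_comp_snd _ _ (pr_add_prod_eq_mul _ _ hWZ)
      (fun z => (fun k : ↥(S \ T) => z k.1, fun k : T => z k.1)) x (u, t)).trans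
      (congrArg _ (pr_prod_eq_inv_card_mul_of_Hc_eq _ hq hp0 hp1 _ _ hHZ' u t))
  convert MIc_padView_eq_zero _ hp0 _ _ hU using 2
  all_goals funext ω; simp [padView, Finset.sum_add_distrib, hzero]

open WeakSecureSummation in
/-- with uniform i.i.d.-style inputs independent of zero-sum keys, and
`X_k = W_k + Z_k`, if `|S ∪ T| ≤ K-1` and `H((Z_k)_{k∈S\T} | (Z_k)_{k∈T}) = |S\T|·L`,
then `I((W_k)_{k∈S}; (X_1,…,X_K) | Σ_k W_k, (W_k,Z_k)_{k∈T}) = 0`. -/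
theorem security_from_key_independence {K L : ℕ} (hK : 2 ≤ K) (hL : 1 ≤ L)
    {F : Type} [Field F] [Fintype F] [DecidableEq F]
    {Ω : Type} [Fintype Ω] (p : Ω → ℝ)
    (hp0 : ∀ ω, 0 ≤ p ω) (hp1 : ∑ ω, p ω = 1)
    (W Z : Fin K → Ω → Fin L → F)
    (hunif : ∀ (k : Fin K) (a : Fin L → F),
      pr p (W k) a = ((Fintype.card F : ℝ) ^ L)⁻¹)
    (hWindep : ∀ w : Fin K → Fin L → F,
      pr p (fun ω k => W k ω) w = ∏ k, pr p (W k) (w k))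
    (hWZindep : ∀ w z : Fin K → Fin L → F,
      pr p (fun ω => (fun k => W k ω, fun k => Z k ω)) (w, z)
        = pr p (fun ω k => W k ω) w * pr p (fun ω k => Z k ω) z)
    (hzero : ∀ ω, ∑ k, Z k ω = 0)
    (S T : Finset (Fin K)) (hST : (S ∪ T).card ≤ K - 1)
    (hHZ : Hc (Fintype.card F) p
        (fun ω (k : {x // x ∈ S \ T}) => Z k.1 ω)
        (fun ω (k : {x // x ∈ T}) => Z k.1 ω)
      = ((S \ T).card : ℝ) * L) :
    MIc (Fintype.card F) p
      (fun ω (k : {x // x ∈ S}) => W k.1 ω)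
      (fun ω (k : Fin K) => W k ω + Z k ω)
      (fun ω => (∑ k, W k ω, fun (k : {x // x ∈ T}) => (W k.1 ω, Z k.1 ω))) = 0 :=
  security_from_key_independence_general p hp0 hp1 W Z hunif hWindep hWZindep hzero S T hHZ
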